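/- The GDP predictive probabilities form a probability distribution: for any partition of n items into k nonempty clusters of sizes N_1, ..., N_k (∑_j N_j = n) and parameters α > 1, β ∈ (0,1), the quantities p_j = ((αβ + N_j - 1)/(α + n - 1)) ∏_{ℓ=1}^{j-1} A_ℓ for j = 1,...,k, and p_{k+1} = (α(1-β)/(α+n-1)) ∏_{ℓ=1}^{k-1} A_ℓ, where A_ℓ = (α(1-β) + S_ℓ)/(α + S_ℓ - 1) and S_ℓ = ∑_{m=ℓ+1}^k N_m, are nonnegative and sum to 1. -/

import Mathlib

/-!
With the tail sums `T j = ∑_{m=j}^{k-1} N m` (`tailSum N k j`) we have `n = T 0`,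
`S ℓ = T (ℓ+1)` and `N j = T j - T (j+1)`, so the numerator of `p j` is
`(α - 1 + T j) - (α(1-β) + T (j+1))`. Since `A j * (α - 1 + T (j+1)) = α(1-β) + T (j+1)`,
the sum `∑ p j` telescopes to `1 - α(1-β)/(α+n-1) * ∏_{ℓ<k-1} A ℓ = 1 - pnew`. All terms are
visibly nonnegative, hence each is at most their total `1`.
-/

open Finset

theorem sum_range_succ_sub_mul_prod_eq {c d : ℝ} {T A : ℕ → ℝ}
    (hA : ∀ ℓ, A ℓ * (d + T (ℓ + 1)) = c + T (ℓ + 1)) (m : ℕ) :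
    ∑ j ∈ range (m + 1), (d + T j - (c + T (j + 1))) * ∏ ℓ ∈ range j, A ℓ =
      d + T 0 - (c + T (m + 1)) * ∏ ℓ ∈ range m, A ℓ := by
  induction m with
  | zero => simp
  | succ m ih =>
    rw [sum_range_succ, ih, prod_range_succ]
    linear_combination (∏ ℓ ∈ range m, A ℓ) * hA m

theorem sum_range_succ_div_mul_prod_add_eq_one {c d : ℝ} {T A : ℕ → ℝ}
    (hA : ∀ ℓ, A ℓ * (d + T (ℓ + 1)) = c + T (ℓ + 1)) {m : ℕ} (hT : T (m + 1) = 0)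
    (hD : d + T 0 ≠ 0) :
    ∑ j ∈ range (m + 1), (d + T j - (c + T (j + 1))) / (d + T 0) * ∏ ℓ ∈ range j, A ℓ +
      c / (d + T 0) * ∏ ℓ ∈ range m, A ℓ = 1 := by
  simp_rw [div_mul_eq_mul_div, ← sum_div, sum_range_succ_sub_mul_prod_eq hA m, hT, add_zero]
  field_simp
  ring

theorem le_of_sum_add_eq {ι M : Type*} [AddCommMonoid M] [PartialOrder M] [IsOrderedAddMonoid M]
    {s : Finset ι} {f : ι → M} {x b : M} (hf : ∀ i ∈ s, 0 ≤ f i) (hx : 0 ≤ x)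
    (h : ∑ i ∈ s, f i + x = b) : (∀ i ∈ s, f i ≤ b) ∧ x ≤ b := by
  subst h
  exact ⟨fun i hi => (single_le_sum hf hi).trans (le_add_of_nonneg_right hx),
    le_add_of_nonneg_left (sum_nonneg hf)⟩

def tailSum (N : ℕ → ℕ) (k j : ℕ) : ℝ := ∑ m ∈ Ico j k, (N m : ℝ)

section tailSum

variable (N : ℕ → ℕ) (k : ℕ)

theorem tailSum_nonneg (j : ℕ) : 0 ≤ tailSum N k j :=
  sum_nonneg fun _ _ => Nat.cast_nonneg _

theorem tailSum_zero : tailSum N k 0 = ∑ j ∈ range k, (N j : ℝ) := by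
  rw [tailSum, range_eq_Ico]

theorem tailSum_self : tailSum N k k = 0 := by
  rw [tailSum, Ico_self, sum_empty]

theorem natCast_eq_tailSum_sub {j : ℕ} (hj : j < k) :
    (N j : ℝ) = tailSum N k j - tailSum N k (j + 1) := by
  rw [tailSum, tailSum, sum_eq_sum_Ico_succ_bot hj, add_sub_cancel_right]

end tailSum

/-- The GDP predictive probabilities form a probability distribution. Clusters are
0-indexed: `N j` for `j < k` are the cluster sizes, `S ℓ = ∑_{m=ℓ+1}^{k} N m`
(0-indexed: `∑_{m ∈ Ico (ℓ+1) k} N m`), `A ℓ = (α(1-β)+S ℓ)/(α+S ℓ-1)`. -/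
theorem gdp_predictive_is_probability
    (α β : ℝ) (hα : 1 < α) (hβ : β ∈ Set.Ioo (0:ℝ) 1)
    (k : ℕ) (hk : 1 ≤ k) (N : ℕ → ℕ) (hN : ∀ j < k, 1 ≤ N j)
    (n : ℕ) (hn : n = ∑ j ∈ range k, N j)
    (S : ℕ → ℝ) (hS : ∀ ℓ, S ℓ = ∑ m ∈ Ico (ℓ + 1) k, (N m : ℝ))
    (A : ℕ → ℝ) (hA : ∀ ℓ, A ℓ = (α * (1 - β) + S ℓ) / (α + S ℓ - 1))
    (p : ℕ → ℝ)
    (hp : ∀ j < k, p j = (α * β + (N j : ℝ) - 1) / (α + (n : ℝ) - 1) *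
      ∏ ℓ ∈ range j, A ℓ)
    (pnew : ℝ)
    (hpnew : pnew = α * (1 - β) / (α + (n : ℝ) - 1) * ∏ ℓ ∈ range (k - 1), A ℓ) :
    (∀ j < k, 0 ≤ p j ∧ p j ≤ 1) ∧ (0 ≤ pnew ∧ pnew ≤ 1) ∧
      (∑ j ∈ range k, p j) + pnew = 1 := by
  obtain ⟨hβ0, hβ1⟩ := hβ
  have hST : ∀ ℓ, S ℓ = tailSum N k (ℓ + 1) := hS
  have hnT : (n : ℝ) = tailSum N k 0 := by rw [tailSum_zero, hn, Nat.cast_sum]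
  have hD : 0 < α + n - 1 := by linarith [tailSum_nonneg N k 0]
  have hA_nonneg : ∀ ℓ, 0 ≤ A ℓ := fun ℓ => by
    have := tailSum_nonneg N k (ℓ + 1)
    rw [hA, hST]; apply div_nonneg <;> nlinarith
  have hA_mul :
      ∀ ℓ, A ℓ * (α - 1 + tailSum N k (ℓ + 1)) = α * (1 - β) + tailSum N k (ℓ + 1) := fun ℓ => by
    have := tailSum_nonneg N k (ℓ + 1)
    rw [hA, hST, sub_add_eq_add_sub]; exact div_mul_cancel₀ _ (by linarith)
  have hterm_nonneg : ∀ a j, 0 ≤ a → 0 ≤ a / (α + n - 1) * ∏ ℓ ∈ range j, A ℓ :=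
    fun _ _ ha => mul_nonneg (div_nonneg ha hD.le) (prod_nonneg fun ℓ _ => hA_nonneg ℓ)
  have hp_nonneg : ∀ j < k, 0 ≤ p j := fun j hj => by
    have : (1 : ℝ) ≤ N j := by exact_mod_cast hN j hj
    rw [hp j hj]; exact hterm_nonneg _ _ (by nlinarith)
  have hpnew_nonneg : 0 ≤ pnew := hpnew ▸ hterm_nonneg _ _ (by nlinarith)
  have hsum : ∑ j ∈ range k, p j + pnew = 1 := by
    obtain ⟨m, rfl⟩ : ∃ m, k = m + 1 := ⟨k - 1, by omega⟩
    rw [← sum_range_succ_div_mul_prod_add_eq_one hA_mul (tailSum_self N _) (by linarith),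
      hpnew, hnT, add_tsub_cancel_right, sub_add_eq_add_sub]
    refine congrArg (· + _) (sum_congr rfl fun j hj => ?_)
    rw [hp j (mem_range.1 hj), natCast_eq_tailSum_sub N _ (mem_range.1 hj), hnT]
    ring
  obtain ⟨hp_le, hpnew_le⟩ :=
    le_of_sum_add_eq (fun j hj => hp_nonneg j (mem_range.1 hj)) hpnew_nonneg hsum
  exact ⟨fun j hj => ⟨hp_nonneg j hj, hp_le j (mem_range.2 hj)⟩, ⟨hpnew_nonneg, hpnew_le⟩,
    hsum⟩
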